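/- Let k ≥ 1, let d_0 = n and d_1, …, d_k be dimensions with n ≤ d_i for every i, and for each i = 1, …, k let A_i be a real n×d_i matrix with orthonormal rows (A_i · A_iᵀ = I_n); set A_0 = I_n. Define the layer weight matrices W_i := A_{i−1}ᵀ · A_i ∈ ℝ^{d_{i−1}×d_i}. Then for every i = 1, …, k the partial product W_1 · W_2 ⋯ W_i equals A_i, and consequently for every x ∈ ℝⁿ and every i, ‖xᵀ · W_1 ⋯ W_i‖ = ‖x‖ in the Euclidean norm. -/
import Mathlib


open Matrix

/-- The partial product `W 0 * W 1 * ⋯ * W (i-1)` of layer weight matrices,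
where `W j : ℝ^{d j × d (j+1)}`; the empty product (for `i = 0`) is the identity. -/
def layerProd (d : ℕ → ℕ)
    (W : (j : ℕ) → Matrix (Fin (d j)) (Fin (d (j + 1))) ℝ) :
    (i : ℕ) → Matrix (Fin (d 0)) (Fin (d i)) ℝ
  | 0 => 1
  | i + 1 => layerProd d W i * W i

lemma norm_vecMul_of_orthonormal_rows {n m : ℕ} (A : Matrix (Fin n) (Fin m) ℝ)
    (hA : A * Aᵀ = 1) (x : EuclideanSpace ℝ (Fin n)) :
    ‖(EuclideanSpace.equiv (Fin m) ℝ).symm (Matrix.vecMul x A)‖ = ‖x‖ := by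
  have hdot : Matrix.vecMul x A ⬝ᵥ Matrix.vecMul x A = x ⬝ᵥ x := by
    calc (x ᵥ* A) ⬝ᵥ (x ᵥ* A) = x ⬝ᵥ (A *ᵥ (Aᵀ *ᵥ x)) := by
          rw [Matrix.dotProduct_mulVec, Matrix.mulVec_transpose]
      _ = x ⬝ᵥ x := by rw [Matrix.mulVec_mulVec, hA, Matrix.one_mulVec]
  rw [EuclideanSpace.norm_eq, EuclideanSpace.norm_eq]
  congr 1
  have h1 : ∀ (p : ℕ) (v : Fin p → ℝ), (∑ i, ‖v i‖ ^ 2) = v ⬝ᵥ v := by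
    intro p v
    simp [dotProduct, Real.norm_eq_abs, sq_abs, sq]
  rw [h1, h1]
  exact hdot

/-- Let `k ≥ 1`, let `d 0 = n` and `n ≤ d i` for all `i ≤ k`, let
`A 0 = I_n`, and let each `A i` (`1 ≤ i ≤ k`) be a real `n × d i` matrix with
orthonormal rows (`A i * (A i)ᵀ = 1`).  With the layer weights
`W i := (A (i-1))ᵀ * A i`, every partial product `W 1 * ⋯ * W i` equals `A i`,
and consequently `x ↦ xᵀ · W 1 ⋯ W i` is Euclidean-norm preserving. -/
theorem rwi_prefix_products_orthonormal (k : ℕ) (hk : 1 ≤ k)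
    (d : ℕ → ℕ) (hd : ∀ i, i ≤ k → d 0 ≤ d i)
    (A : (i : ℕ) → Matrix (Fin (d 0)) (Fin (d i)) ℝ)
    (hA0 : A 0 = 1)
    (hA : ∀ i, 1 ≤ i → i ≤ k → A i * (A i)ᵀ = 1) :
    ∀ i, 1 ≤ i → i ≤ k →
      layerProd d (fun j => (A j)ᵀ * A (j + 1)) i = A i ∧
      ∀ x : EuclideanSpace ℝ (Fin (d 0)),
        ‖(EuclideanSpace.equiv (Fin (d i)) ℝ).symm
            (Matrix.vecMul x (layerProd d (fun j => (A j)ᵀ * A (j + 1)) i))‖ = ‖x‖ := by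
  have key : ∀ i, 1 ≤ i → i ≤ k →
      layerProd d (fun j => (A j)ᵀ * A (j + 1)) i = A i := by
    intro i
    induction i with
    | zero => omega
    | succ i ih =>
      intro _ hik
      rcases Nat.eq_zero_or_pos i with h0 | hpos
      · subst h0
        show layerProd d _ 0 * ((A 0)ᵀ * A 1) = A 1
        rw [hA0]
        show (1 : Matrix (Fin (d 0)) (Fin (d 0)) ℝ) * ((1 : Matrix (Fin (d 0)) (Fin (d 0)) ℝ)ᵀ * A 1) = A 1
        rw [Matrix.transpose_one]; simp [Matrix.one_mul]
      · have hik' : i ≤ k := by omega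
        show layerProd d _ i * ((A i)ᵀ * A (i + 1)) = A (i + 1)
        rw [ih hpos hik', ← Matrix.mul_assoc, hA i hpos hik']; simp [Matrix.one_mul]
  intro i h1 hik
  refine ⟨key i h1 hik, fun x => ?_⟩
  rw [key i h1 hik]
  exact norm_vecMul_of_orthonormal_rows (A i) (hA i h1 hik) x
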